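/- Let k and M be integers with 1 ≤ k ≤ M, and let f : ℝ → X be k times continuously differentiable on [0,T]. Let f_n = f(t_n) for 0 ≤ n ≤ M. Then: (i) for every k ≤ n ≤ M, ‖D^k f_n‖ ≤ (√k/√τ) · (∫_{t_{n−k}}^{t_n} ‖∂_t^k f(t)‖² dt)^{1/2}; and (ii) consequently, ‖D^k f‖_0 ≤ k · (∫_0^T ‖∂_t^k f(t)‖² dt)^{1/2}. -/

import Mathlib

/-- backward difference quotient of a sequence. -/
noncomputable def Dq {X : Type*} [NormedAddCommGroup X] [NormedSpace ℝ X] (τ : ℝ) (f : ℕ → X) : ℕ → X :=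
  fun n => τ⁻¹ • (f n - f (n - 1))

/-- discrete `L²` norm `(τ Σ_{n=a}^{b} ‖f n‖²)^{1/2}`. -/
noncomputable def seqNorm0 {X : Type*} [NormedAddCommGroup X]
    (τ : ℝ) (a b : ℕ) (f : ℕ → X) : ℝ :=
  Real.sqrt (τ * ∑ n ∈ Finset.Icc a b, ‖f n‖^2)

/-!
On the grid, `D^k f_n = δ^k f (nτ)` for the continuous backward difference quotient
`δ g t = τ⁻¹ (g t - g (t - τ))`, and `δ` commutes with differentiation. For one difference,
`δ f t = τ⁻¹ ∫_{t-τ}^t f'`, so Cauchy–Schwarz gives `‖δ f t‖² ≤ τ⁻¹ ∫_{t-τ}^t ‖f'‖²`. For `k + 1`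
differences, the mean value inequality bounds `‖δ (δ^k f) t‖` by `sup_{[t-τ,t]} ‖δ^k f'‖`, and by
induction each of these values is at most `(τ⁻¹ ∫ ‖∂^{k+1} f‖²)^{1/2}` over `[t-(k+1)τ, t]`.
For the discrete norm, every cell `[mτ, (m+1)τ]` lies in at most `k` of the windows
`[(n-k)τ, nτ]`.
-/

open Set MeasureTheory intervalIntegral

theorem sq_intervalIntegral_le {g : ℝ → ℝ} {a b : ℝ} (hab : a ≤ b)
    (hg : ContinuousOn g (Icc a b)) :
    (∫ u in a..b, g u) ^ 2 ≤ (b - a) * ∫ u in a..b, g u ^ 2 := by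
  rcases hab.eq_or_lt with rfl | hlt
  · simp
  have hint : ∀ {h : ℝ → ℝ}, ContinuousOn h (Icc a b) → IntegrableOn h (Ioc a b) := fun hh =>
    hh.integrableOn_Icc.mono_set Ioc_subset_Icc_self
  have hjensen := (Even.convexOn_pow (n := 2) even_two).map_set_average_le
    (continuous_pow 2).continuousOn isClosed_univ (by simp [hlt]) (by simp)
    (Filter.Eventually.of_forall fun _ => mem_univ _) (hint hg) (hint (hg.pow 2))
  rw [setAverage_eq, setAverage_eq, Real.volume_real_Ioc_of_le hab, ← integral_of_le hab,
    ← integral_of_le hab, smul_eq_mul, smul_eq_mul] at hjensen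
  have hba : b - a ≠ 0 := (sub_pos.2 hlt).ne'
  calc (∫ u in a..b, g u) ^ 2 = (b - a) ^ 2 * ((b - a)⁻¹ * ∫ u in a..b, g u) ^ 2 := by
        field_simp
    _ ≤ (b - a) ^ 2 * ((b - a)⁻¹ * ∫ u in a..b, g u ^ 2) := by gcongr
    _ = (b - a) * ∫ u in a..b, g u ^ 2 := by field_simp

theorem sum_Icc_sum_range_le {J : ℕ → ℝ} (hJ : ∀ m, 0 ≤ J m) (k M : ℕ) :
    ∑ n ∈ Finset.Icc k M, ∑ i ∈ Finset.range k, J (n - k + i)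
      ≤ k * ∑ m ∈ Finset.range M, J m := by
  rw [Finset.sum_comm]
  calc ∑ i ∈ Finset.range k, ∑ n ∈ Finset.Icc k M, J (n - k + i)
        ≤ ∑ i ∈ Finset.range k, ∑ m ∈ Finset.range M, J m := by
        refine Finset.sum_le_sum fun i hi => ?_
        have hinj : InjOn (fun n => n - k + i) (Finset.Icc k M) := fun n₁ h₁ n₂ h₂ h => by
          simp only [Finset.coe_Icc, mem_Icc] at h₁ h₂ h; omega
        rw [← Finset.sum_image hinj]
        refine Finset.sum_le_sum_of_subset_of_nonneg (fun m hm => ?_) fun m _ _ => hJ m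
        simp only [Finset.mem_image, Finset.mem_Icc, Finset.mem_range] at hm hi ⊢
        omega
    _ = k * ∑ m ∈ Finset.range M, J m := by
        rw [Finset.sum_const, Finset.card_range, nsmul_eq_mul]

theorem sum_integral_Icc_windows_le {g : ℝ → ℝ} (hg : ∀ u, 0 ≤ g u) {τ : ℝ} (hτ : 0 ≤ τ)
    (k M : ℕ) (hint : IntervalIntegrable g volume 0 (M * τ)) :
    ∑ n ∈ Finset.Icc k M, ∫ u in (n - k : ℝ) * τ..n * τ, g u ≤ k * ∫ u in 0..M * τ, g u := by
  have hint_mono : ∀ {p q : ℕ}, p ≤ q → q ≤ M → IntervalIntegrable g volume (p * τ) (q * τ) := by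
    intro p q hpq hqM
    refine hint.mono_set ?_
    rw [Set.uIcc_of_le (by gcongr), Set.uIcc_of_le (by positivity)]
    exact Icc_subset_Icc (by positivity) (by gcongr)
  have htotal : ∫ u in 0..M * τ, g u = ∑ m ∈ Finset.range M, ∫ u in m * τ..(m + 1) * τ, g u := by
    have h := sum_integral_adjacent_intervals (a := fun m : ℕ => (m : ℝ) * τ) (n := M)
      (μ := volume) (f := g) fun m hm => hint_mono (Nat.le_succ m) hm
    rw [Nat.cast_zero, zero_mul] at h
    push_cast at h
    exact h.symm
  have hwindow : ∀ n ∈ Finset.Icc k M, ∫ u in (n - k : ℝ) * τ..n * τ, g u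
      = ∑ i ∈ Finset.range k, ∫ u in ((n - k + i : ℕ) : ℝ) * τ..((n - k + i : ℕ) + 1) * τ, g u := by
    intro n hn
    rw [Finset.mem_Icc] at hn
    have h := sum_integral_adjacent_intervals (a := fun i : ℕ => ((n - k + i : ℕ) : ℝ) * τ)
      (n := k) (μ := volume) (f := g) fun i hi => hint_mono (by omega) (by omega)
    push_cast [Nat.cast_sub hn.1] at h ⊢
    simp only [add_zero, sub_add_cancel, ← add_assoc] at h
    exact h.symm
  rw [htotal, Finset.sum_congr rfl hwindow]
  exact sum_Icc_sum_range_le (J := fun m : ℕ => ∫ u in (m : ℝ) * τ..(m + 1) * τ, g u)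
    (fun m => integral_nonneg (by gcongr; linarith) fun u _ => hg u) k M

theorem sqrt_inv_mul_le_sqrt_div_mul_rpow {τ I : ℝ} (hτ : 0 ≤ τ) {k : ℕ} (hk : 1 ≤ k) :
    √(τ⁻¹ * I) ≤ √k / √τ * I ^ ((1 : ℝ) / 2) := by
  rw [Real.sqrt_mul (inv_nonneg.2 hτ), Real.sqrt_inv, ← Real.sqrt_eq_rpow, ← one_div]
  gcongr
  exact Real.one_le_sqrt.2 (by exact_mod_cast hk)

theorem sqrt_natCast_mul_le_mul_rpow (k : ℕ) (I : ℝ) :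
    √(k * I) ≤ k * I ^ ((1 : ℝ) / 2) := by
  rw [Real.sqrt_mul (Nat.cast_nonneg k), ← Real.sqrt_eq_rpow]
  gcongr
  exact Real.sqrt_le_self_iff.2 (by norm_cast; omega)

theorem seqNorm0_le_sqrt_sum {X : Type*} [NormedAddCommGroup X] {d : ℕ → X} {I : ℕ → ℝ}
    {τ : ℝ} (hτ : 0 < τ) {k M : ℕ} (hI : ∀ n ∈ Finset.Icc k M, 0 ≤ I n)
    (hd : ∀ n ∈ Finset.Icc k M, ‖d n‖ ≤ √(τ⁻¹ * I n)) :
    seqNorm0 τ k M d ≤ √(∑ n ∈ Finset.Icc k M, I n) := by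
  rw [seqNorm0, Finset.mul_sum]
  gcongr with n hn
  calc τ * ‖d n‖ ^ 2 ≤ τ * √(τ⁻¹ * I n) ^ 2 := by gcongr; exact hd n hn
    _ = I n := by
      rw [Real.sq_sqrt (mul_nonneg (inv_nonneg.2 hτ.le) (hI n hn))]
      field_simp

section BackwardDifference

variable {X : Type*} [NormedAddCommGroup X] [NormedSpace ℝ X]

noncomputable def bwdDiff (τ : ℝ) (f : ℝ → X) : ℝ → X :=
  fun t => τ⁻¹ • (f t - f (t - τ))

theorem iterate_Dq_eq_iterate_bwdDiff (τ : ℝ) (f : ℝ → X) {j n : ℕ} (h : j ≤ n) :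
    (Dq τ)^[j] (fun m : ℕ => f (m * τ)) n = (bwdDiff τ)^[j] f (n * τ) := by
  induction j generalizing n with
  | zero => rfl
  | succ j ih =>
    rw [Function.iterate_succ_apply', Function.iterate_succ_apply']
    simp only [Dq, bwdDiff]
    rw [ih (by omega), ih (by omega), Nat.cast_sub (by omega : 1 ≤ n), Nat.cast_one, sub_mul,
      one_mul]

theorem hasDerivWithinAt_bwdDiff {f f' : ℝ → X} {a b τ : ℝ} (hτ : 0 ≤ τ)
    (hf : ∀ x ∈ Icc a b, HasDerivWithinAt f (f' x) (Icc a b) x) {x : ℝ}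
    (hx : x ∈ Icc (a + τ) b) :
    HasDerivWithinAt (bwdDiff τ f) (bwdDiff τ f' x) (Icc (a + τ) b) x := by
  have hsub : Icc (a + τ) b ⊆ Icc a b := Icc_subset_Icc (by linarith) le_rfl
  have hshift : MapsTo (· - τ) (Icc (a + τ) b) (Icc a b) := fun y hy =>
    ⟨by linarith [hy.1], by linarith [hy.2]⟩
  have hdelay : HasDerivWithinAt (fun y => f (y - τ)) (f' (x - τ)) (Icc (a + τ) b) x := by
    have h := (hf (x - τ) (hshift hx)).scomp x ((hasDerivWithinAt_id x _).sub_const τ) hshift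
    rwa [one_smul] at h
  exact (((hf x (hsub hx)).mono hsub).sub hdelay).const_smul τ⁻¹

theorem hasDerivWithinAt_iterate_bwdDiff {f f' : ℝ → X} {a b τ : ℝ} (hτ : 0 ≤ τ)
    (hf : ∀ x ∈ Icc a b, HasDerivWithinAt f (f' x) (Icc a b) x) (j : ℕ) :
    ∀ x ∈ Icc (a + j * τ) b,
      HasDerivWithinAt ((bwdDiff τ)^[j] f) ((bwdDiff τ)^[j] f' x) (Icc (a + j * τ) b) x := by
  induction j with
  | zero => simpa using hf
  | succ j ih =>
    intro x hx
    rw [Function.iterate_succ_apply', Function.iterate_succ_apply']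
    rw [Nat.cast_succ, add_one_mul, ← add_assoc] at hx ⊢
    exact hasDerivWithinAt_bwdDiff hτ ih hx

theorem norm_bwdDiff_le_of_norm_deriv_le {G G' : ℝ → X} {τ t C : ℝ} (hτ : 0 < τ)
    (hG : ∀ x ∈ Icc (t - τ) t, HasDerivWithinAt G (G' x) (Icc (t - τ) t) x)
    (bound : ∀ x ∈ Ico (t - τ) t, ‖G' x‖ ≤ C) :
    ‖bwdDiff τ G t‖ ≤ C := by
  have hmvt := norm_image_sub_le_of_norm_deriv_le_segment' hG bound t
    (right_mem_Icc.2 (by linarith))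
  rw [sub_sub_cancel] at hmvt
  rw [bwdDiff, norm_smul, Real.norm_of_nonneg (inv_nonneg.2 hτ.le)]
  calc τ⁻¹ * ‖G t - G (t - τ)‖ ≤ τ⁻¹ * (C * τ) := by gcongr
    _ = C := by field_simp

variable [CompleteSpace X]

theorem norm_bwdDiff_le_sqrt_integral {f φ : ℝ → X} {τ t : ℝ} (hτ : 0 < τ)
    (hf : ∀ x ∈ Icc (t - τ) t, HasDerivWithinAt f (φ x) (Icc (t - τ) t) x)
    (hφ : ContinuousOn φ (Icc (t - τ) t)) :
    ‖bwdDiff τ f t‖ ≤ √(τ⁻¹ * ∫ u in t - τ..t, ‖φ u‖ ^ 2) := by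
  have hle : t - τ ≤ t := by linarith
  have hftc : ∫ u in t - τ..t, φ u = f t - f (t - τ) :=
    integral_eq_sub_of_hasDerivAt_of_le hle (fun x hx => (hf x hx).continuousWithinAt)
      (fun x hx => (hf x (Ioo_subset_Icc_self hx)).hasDerivAt (Icc_mem_nhds hx.1 hx.2))
      (hφ.intervalIntegrable_of_Icc hle)
  have hcs := sq_intervalIntegral_le hle hφ.norm
  rw [sub_sub_cancel] at hcs
  rw [bwdDiff, norm_smul, Real.norm_of_nonneg (inv_nonneg.2 hτ.le), ← hftc]
  calc τ⁻¹ * ‖∫ u in t - τ..t, φ u‖ ≤ τ⁻¹ * ∫ u in t - τ..t, ‖φ u‖ := by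
        gcongr; exact norm_integral_le_integral_norm hle
    _ ≤ √(τ⁻¹ * ∫ u in t - τ..t, ‖φ u‖ ^ 2) := by
        refine Real.le_sqrt_of_sq_le ?_
        calc (τ⁻¹ * ∫ u in t - τ..t, ‖φ u‖) ^ 2
            ≤ τ⁻¹ ^ 2 * (τ * ∫ u in t - τ..t, ‖φ u‖ ^ 2) := by rw [mul_pow]; gcongr
          _ = τ⁻¹ * ∫ u in t - τ..t, ‖φ u‖ ^ 2 := by field_simp

theorem norm_iterate_bwdDiff_le {f : ℝ → X} {s : Set ℝ} {τ t : ℝ} (hτ : 0 < τ)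
    (hs : UniqueDiffOn ℝ s) {j : ℕ} (hj : 1 ≤ j) (hf : ContDiffOn ℝ j f s)
    (hwin : Icc (t - j * τ) t ⊆ s) :
    ‖(bwdDiff τ)^[j] f t‖ ≤ √(τ⁻¹ * ∫ u in t - j * τ..t, ‖iteratedDerivWithin j f s u‖ ^ 2) := by
  induction j, hj using Nat.le_induction generalizing f t with
  | base =>
    rw [Nat.cast_one, one_mul] at hwin ⊢
    rw [Function.iterate_one, iteratedDerivWithin_one]
    refine norm_bwdDiff_le_sqrt_integral hτ (fun x hx => ?_)
      ((hf.continuousOn_derivWithin hs le_rfl).mono hwin)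
    exact ((hf.differentiableOn one_ne_zero x (hwin hx)).hasDerivWithinAt).mono hwin
  | succ j hj ih =>
    have hderiv : ∀ x ∈ s, HasDerivWithinAt f (derivWithin f s x) s x := fun x hx =>
      (hf.differentiableOn (by simp) x hx).hasDerivWithinAt
    have hf' : ContDiffOn ℝ j (derivWithin f s) s := hf.derivWithin hs (by push_cast; rfl)
    push_cast at hwin ⊢
    have hderivG : ∀ x ∈ Icc (t - τ) t, HasDerivWithinAt ((bwdDiff τ)^[j] f)
        ((bwdDiff τ)^[j] (derivWithin f s) x) (Icc (t - τ) t) x := by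
      have h := hasDerivWithinAt_iterate_bwdDiff hτ.le
        (fun x hx => (hderiv x (hwin hx)).mono hwin) j
      rwa [show t - (j + 1) * τ + j * τ = t - τ by ring] at h
    rw [Function.iterate_succ_apply', iteratedDerivWithin_succ']
    refine norm_bwdDiff_le_of_norm_deriv_le hτ hderivG fun u hu => (ih hf' ?_).trans ?_
    · exact (Icc_subset_Icc (by linarith [hu.1]) hu.2.le).trans hwin
    · have hcont := (hf'.continuousOn_iteratedDerivWithin le_rfl hs).norm.pow 2
      gcongr
      exact integral_mono_interval (by linarith [hu.1]) (sub_le_self _ (by positivity)) hu.2.le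
        (Filter.Eventually.of_forall fun _ => sq_nonneg _)
        ((hcont.mono hwin).intervalIntegrable_of_Icc (sub_le_self _ (by positivity)))

end BackwardDifference

theorem dq_bounds_by_derivatives_general
    {X : Type*} [NormedAddCommGroup X] [InnerProductSpace ℝ X] [CompleteSpace X]
    (T : ℝ) (hT : 0 < T) (M : ℕ) (τ : ℝ) (hτ : τ = T / M)
    (k : ℕ) (hk : 1 ≤ k) (hkM : k ≤ M)
    (f : ℝ → X) (hf : ContDiffOn ℝ (k : ℕ∞) f (Set.Icc 0 T))
    (s : ℕ → X) (hs : s = fun n : ℕ => f ((n : ℝ) * τ)) :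
    (∀ n : ℕ, k ≤ n → n ≤ M →
      ‖(Dq τ)^[k] s n‖ ≤
        (Real.sqrt k / Real.sqrt τ) *
          (∫ t in (((n:ℝ) - (k:ℝ)) * τ)..((n:ℝ) * τ),
            ‖iteratedDerivWithin k f (Set.Icc 0 T) t‖^2) ^ ((1:ℝ)/2))
    ∧ seqNorm0 τ k M ((Dq τ)^[k] s) ≤
        (k:ℝ) * (∫ t in (0:ℝ)..T, ‖iteratedDerivWithin k f (Set.Icc 0 T) t‖^2) ^ ((1:ℝ)/2) := by
  subst hs
  have hM : (M : ℝ) ≠ 0 := by exact_mod_cast (by omega : M ≠ 0)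
  have hτ0 : 0 < τ := hτ ▸ div_pos hT (by positivity)
  have hMτ : (M : ℝ) * τ = T := by rw [hτ]; field_simp
  set φ := iteratedDerivWithin k f (Icc 0 T)
  have hwindow : ∀ n ∈ Finset.Icc k M, ‖(Dq τ)^[k] (fun n : ℕ => f (n * τ)) n‖
      ≤ √(τ⁻¹ * ∫ t in (n - k : ℝ) * τ..n * τ, ‖φ t‖ ^ 2) := by
    intro n hn
    obtain ⟨hkn, hnM⟩ := Finset.mem_Icc.1 hn
    rw [iterate_Dq_eq_iterate_bwdDiff τ f hkn, sub_mul]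
    refine norm_iterate_bwdDiff_le hτ0 (uniqueDiffOn_Icc hT) hk hf (Icc_subset_Icc ?_ ?_)
    · rw [sub_nonneg]; gcongr
    · rw [← hMτ]; gcongr
  refine ⟨fun n hkn hnM => (hwindow n (Finset.mem_Icc.2 ⟨hkn, hnM⟩)).trans
    (sqrt_inv_mul_le_sqrt_div_mul_rpow hτ0.le hk), ?_⟩
  have hφ : ContinuousOn (fun t => ‖φ t‖ ^ 2) (Icc 0 T) :=
    (hf.continuousOn_iteratedDerivWithin le_rfl (uniqueDiffOn_Icc hT)).norm.pow 2
  have hcells := sum_integral_Icc_windows_le (fun t => sq_nonneg ‖φ t‖) hτ0.le k M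
    (hMτ ▸ hφ.intervalIntegrable_of_Icc hT.le)
  rw [hMτ] at hcells
  calc seqNorm0 τ k M ((Dq τ)^[k] fun n : ℕ => f (n * τ))
      ≤ √(∑ n ∈ Finset.Icc k M, ∫ t in (n - k : ℝ) * τ..n * τ, ‖φ t‖ ^ 2) :=
        seqNorm0_le_sqrt_sum hτ0 (fun n hn => integral_nonneg
          (by gcongr; linarith [(Finset.mem_Icc.1 hn).1]) fun _ _ => sq_nonneg _) hwindow
    _ ≤ √(k * ∫ t in (0 : ℝ)..T, ‖φ t‖ ^ 2) := Real.sqrt_le_sqrt hcells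
    _ ≤ k * (∫ t in (0 : ℝ)..T, ‖φ t‖ ^ 2) ^ ((1 : ℝ) / 2) := sqrt_natCast_mul_le_mul_rpow k _

/-- Estimates (4.22)–(4.23): bounds for the `k`-th difference quotients of the
values of a function with `k` continuous derivatives on `[0,T]` in terms of
`L²`-in-time norms of its `k`-th derivative. -/
theorem dq_bounds_by_derivatives
    {X : Type*} [NormedAddCommGroup X] [InnerProductSpace ℝ X] [CompleteSpace X]
    (T : ℝ) (hT : 0 < T) (M : ℕ) (hM : 0 < M) (τ : ℝ) (hτ : τ = T / M)
    (k : ℕ) (hk : 1 ≤ k) (hkM : k ≤ M)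
    (f : ℝ → X) (hf : ContDiffOn ℝ (k : ℕ∞) f (Set.Icc 0 T))
    (s : ℕ → X) (hs : s = fun n : ℕ => f ((n : ℝ) * τ)) :
    (∀ n : ℕ, k ≤ n → n ≤ M →
      ‖(Dq τ)^[k] s n‖ ≤
        (Real.sqrt k / Real.sqrt τ) *
          (∫ t in (((n:ℝ) - (k:ℝ)) * τ)..((n:ℝ) * τ),
            ‖iteratedDerivWithin k f (Set.Icc 0 T) t‖^2) ^ ((1:ℝ)/2))
    ∧ seqNorm0 τ k M ((Dq τ)^[k] s) ≤
        (k:ℝ) * (∫ t in (0:ℝ)..T, ‖iteratedDerivWithin k f (Set.Icc 0 T) t‖^2) ^ ((1:ℝ)/2) :=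
  dq_bounds_by_derivatives_general T hT M τ hτ k hk hkM f hf s hs
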